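/- For a POMDP P and a policy σ with associated winning region W, the set of winning belief supports of the shortcutted POMDP P{σ} coincides with that of P. -/

import Mathlib

open scoped ENNReal Classical

/-- A POMDP: transition function `P` and observation function `obs`. -/
structure POMDP (S Act Ω : Type) where
  P : S → Act → PMF S
  obs : S → Ω

namespace POMDP

variable {S Act Ω : Type}

/-- A history-dependent observation-based policy: maps the observation-action
history and the current observation to a distribution over actions. -/
def Policy (Act Ω : Type) := List (Ω × Act) → Ω → PMF Act

/-- Probability to reach `T` within `n` steps, starting in state `s` with history `h`. -/
noncomputable def reachN (M : POMDP S Act Ω) (σ : Policy Act Ω) (T : Set S) :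
    ℕ → List (Ω × Act) → S → ℝ≥0∞
  | 0, _, s => if s ∈ T then 1 else 0
  | n + 1, h, s =>
    if s ∈ T then 1
    else ∑' α : Act, σ h (M.obs s) α *
      ∑' s' : S, M.P s α s' * M.reachN σ T n (h ++ [(M.obs s, α)]) s'

/-- Probability to eventually reach `T` from initial belief `b` under policy `σ`. -/
noncomputable def prReach (M : POMDP S Act Ω) (σ : Policy Act Ω) (T : Set S)
    (b : PMF S) : ℝ≥0∞ :=
  ⨆ n, ∑' s : S, b s * M.reachN σ T n [] s

/-- A policy is winning from belief `b`: AVOID reached with probability 0,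
REACH reached with probability 1. -/
def WinningPolicyFrom (M : POMDP S Act Ω) (REACH AVOID : Set S)
    (σ : Policy Act Ω) (b : PMF S) : Prop :=
  M.prReach σ AVOID b = 0 ∧ M.prReach σ REACH b = 1

/-- A belief is winning if some winning policy exists from it. -/
def WinningBelief (M : POMDP S Act Ω) (REACH AVOID : Set S) (b : PMF S) : Prop :=
  ∃ σ, M.WinningPolicyFrom REACH AVOID σ b

/-- A set of states is absorbing. -/
def Absorbing (M : POMDP S Act Ω) (T : Set S) : Prop :=
  ∀ s ∈ T, ∀ α, M.P s α = PMF.pure s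

/-- A belief support: a nonempty set of states sharing a common observation. -/
def IsBeliefSupport (M : POMDP S Act Ω) (b : Set S) : Prop :=
  b.Nonempty ∧ ∀ s ∈ b, ∀ s' ∈ b, M.obs s = M.obs s'

/-- A policy is winning from a belief support `b` if it is winning from every
belief whose support is `b`. -/
def WinningFromSupport (M : POMDP S Act Ω) (REACH AVOID : Set S)
    (σ : Policy Act Ω) (b : Set S) : Prop :=
  ∀ β : PMF S, β.support = b → M.WinningPolicyFrom REACH AVOID σ β

/-- A belief support is winning if some policy is winning from it. -/
def WinningSupport (M : POMDP S Act Ω) (REACH AVOID : Set S) (b : Set S) : Prop :=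
  ∃ σ, M.WinningFromSupport REACH AVOID σ b

end POMDP

namespace POMDP

variable {S Act Ω : Type}

/-- The shortcutted POMDP `P{σ}`: a fresh action (encoded by `none`) leads
surely to `top` from states whose singleton support is in the winning region `W`
of the policy `σ`, and surely to `bot` otherwise. All original transitions and
the observation function are preserved. -/
noncomputable def shortcut (M : POMDP S Act Ω) (W : Set (Set S)) (top bot : S) :
    POMDP S (Option Act) Ω where
  P := fun s α =>
    match α with
    | some a => M.P s a
    | none => PMF.pure (if ({s} : Set S) ∈ W then top else bot)
  obs := M.obs

end POMDP

/-!
A policy of `M` is a policy of `M{σ}` that never takes the shortcut, with the same reachability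
probabilities. Conversely, let `τ` win in `M{σ}`, and follow `τ` in `M` up to the first history
at which it takes the shortcut with positive probability, then play `σ` from the empty history.
Every state that `τ` reaches with positive probability has probability `0` of reaching `AVOID`,
so at a switch point the shortcut cannot lead to `⊥ ∈ AVOID`: the current state `s` has
`{s} ∈ W`, and `σ` wins from it. Hence the switched policy never reaches `AVOID` and reaches
`REACH` with at least the probability that `τ` does.
-/
theorem ENNReal.tsum_mul_iSup_of_monotone {α : Type*} (c : α → ℝ≥0∞) {f : ℕ → α → ℝ≥0∞}
    (hf : ∀ a, Monotone fun n => f n a) :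
    ∑' a, c a * ⨆ n, f n a = ⨆ n, ∑' a, c a * f n a := by
  simp_rw [ENNReal.mul_iSup, ENNReal.tsum_eq_iSup_sum]
  rw [iSup_comm]
  refine iSup_congr fun s => ENNReal.finsetSum_iSup_of_monotone fun a => ?_
  exact fun m n hmn => mul_le_mul_right (hf a hmn) (c a)

theorem tsum_option_of_none_eq_zero {α M : Type*} [AddCommMonoid M] [TopologicalSpace M]
    {f : Option α → M} (h : f none = 0) : ∑' o, f o = ∑' a, f (some a) := by
  refine ((Option.some_injective α).tsum_eq fun o ho => ?_).symm
  cases o with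
  | none => exact absurd h ho
  | some a => exact ⟨a, rfl⟩

namespace POMDP

variable {S Act Ω : Type}

section ReachN

variable (M : POMDP S Act Ω) (π : Policy Act Ω) (T : Set S)

theorem reachN_of_mem {n : ℕ} {h : List (Ω × Act)} {s : S} (hs : s ∈ T) :
    M.reachN π T n h s = 1 := by
  cases n <;> simp [reachN, hs]

theorem reachN_succ_of_notMem {n : ℕ} {h : List (Ω × Act)} {s : S} (hs : s ∉ T) :
    M.reachN π T (n + 1) h s = ∑' a, π h (M.obs s) a *
      ∑' s', M.P s a s' * M.reachN π T n (h ++ [(M.obs s, a)]) s' := by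
  rw [reachN, if_neg hs]

variable {M π T}

theorem reachN_le_one (n : ℕ) (h : List (Ω × Act)) (s : S) : M.reachN π T n h s ≤ 1 := by
  induction n generalizing h s with
  | zero => unfold reachN; split_ifs <;> simp
  | succ n ih =>
    by_cases hs : s ∈ T
    · exact (reachN_of_mem M π T hs).le
    rw [reachN_succ_of_notMem M π T hs]
    calc _ ≤ ∑' a, π h (M.obs s) a * ∑' s', M.P s a s' * 1 := by gcongr; exact ih _ _
      _ = 1 := by simp

theorem reachN_mono (h : List (Ω × Act)) (s : S) : Monotone fun n => M.reachN π T n h s := by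
  refine monotone_nat_of_le_succ fun n => ?_
  induction n generalizing h s with
  | zero => unfold reachN; split_ifs <;> simp
  | succ n ih =>
    by_cases hs : s ∈ T
    · simp [reachN_of_mem M π T hs]
    rw [reachN_succ_of_notMem M π T hs, reachN_succ_of_notMem M π T hs]
    gcongr
    exact ih _ _

theorem notMem_of_reachN_eq_zero {n : ℕ} {h : List (Ω × Act)} {s : S}
    (h0 : M.reachN π T n h s = 0) : s ∉ T := fun hs => by
  simp [reachN_of_mem M π T hs] at h0

theorem reachN_append_eq_zero {n : ℕ} {h : List (Ω × Act)} {s s' : S} {a : Act}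
    (h0 : M.reachN π T (n + 1) h s = 0) (ha : π h (M.obs s) a ≠ 0) (hs' : M.P s a s' ≠ 0) :
    M.reachN π T n (h ++ [(M.obs s, a)]) s' = 0 := by
  rw [reachN_succ_of_notMem M π T (notMem_of_reachN_eq_zero h0), ENNReal.tsum_eq_zero] at h0
  have hsum := (mul_eq_zero.1 (h0 a)).resolve_left ha
  exact (mul_eq_zero.1 (ENNReal.tsum_eq_zero.1 hsum s')).resolve_left hs'

theorem tsum_le_iSup_reachN {h : List (Ω × Act)} {s : S} (hs : s ∉ T) (X : Act → S → ℝ≥0∞)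
    (hX : ∀ a s', π h (M.obs s) a ≠ 0 → M.P s a s' ≠ 0 →
      X a s' ≤ ⨆ m, M.reachN π T m (h ++ [(M.obs s, a)]) s') :
    ∑' a, π h (M.obs s) a * ∑' s', M.P s a s' * X a s' ≤ ⨆ m, M.reachN π T m h s := by
  calc ∑' a, π h (M.obs s) a * ∑' s', M.P s a s' * X a s'
      ≤ ∑' a, π h (M.obs s) a * ∑' s', M.P s a s' *
          ⨆ m, M.reachN π T m (h ++ [(M.obs s, a)]) s' := by
        refine ENNReal.tsum_le_tsum fun a => ?_
        rcases eq_or_ne (π h (M.obs s) a) 0 with ha | ha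
        · simp [ha]
        refine mul_le_mul_right (ENNReal.tsum_le_tsum fun s' => ?_) _
        rcases eq_or_ne (M.P s a s') 0 with hs' | hs'
        · simp [hs']
        exact mul_le_mul_right (hX a s' ha hs') _
    _ = ⨆ m, ∑' a, π h (M.obs s) a * ∑' s', M.P s a s' *
          M.reachN π T m (h ++ [(M.obs s, a)]) s' := by
        simp_rw [ENNReal.tsum_mul_iSup_of_monotone _ fun s' => reachN_mono _ s']
        refine ENNReal.tsum_mul_iSup_of_monotone _ fun a m n hmn => ?_
        dsimp only
        gcongr
        exact reachN_mono _ _ hmn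
    _ = ⨆ m, M.reachN π T (m + 1) h s := by simp_rw [reachN_succ_of_notMem M π T hs]
    _ ≤ ⨆ m, M.reachN π T m h s := iSup_le fun m => le_iSup_of_le (m + 1) le_rfl

theorem reachN_append_congr {π' : Policy Act Ω} {h h' : List (Ω × Act)}
    (hπ : ∀ g, π (h ++ g) = π' (h' ++ g)) (n : ℕ) (g : List (Ω × Act)) (s : S) :
    M.reachN π T n (h ++ g) s = M.reachN π' T n (h' ++ g) s := by
  induction n generalizing g s with
  | zero => rfl
  | succ n ih =>
    by_cases hs : s ∈ T
    · rw [reachN_of_mem M π T hs, reachN_of_mem M π' T hs]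
    simp only [reachN_succ_of_notMem M _ T hs, hπ, List.append_assoc, ih]

end ReachN

section PrReach

variable {M : POMDP S Act Ω} {π : Policy Act Ω} {T : Set S}

theorem prReach_eq_zero_iff {β : PMF S} :
    M.prReach π T β = 0 ↔ ∀ s ∈ β.support, ∀ n, M.reachN π T n [] s = 0 := by
  simp only [prReach, ENNReal.iSup_eq_zero, ENNReal.tsum_eq_zero, mul_eq_zero,
    PMF.mem_support_iff]
  exact ⟨fun h s hs n => (h n s).resolve_left hs,
    fun h n s => or_iff_not_imp_left.2 fun hs => h s hs n⟩

theorem prReach_le_one (β : PMF S) : M.prReach π T β ≤ 1 :=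
  iSup_le fun n => (ENNReal.tsum_le_tsum fun s =>
    mul_le_of_le_one_right' (reachN_le_one n [] s)).trans_eq β.tsum_coe

theorem prReach_pure (s : S) : M.prReach π T (PMF.pure s) = ⨆ n, M.reachN π T n [] s := by
  simp [prReach, PMF.pure_apply]

theorem prReach_le_prReach_of_le_iSup {Act' : Type} {M' : POMDP S Act' Ω} {π' : Policy Act' Ω}
    {β : PMF S} (h : ∀ s ∈ β.support, ∀ n, M.reachN π T n [] s ≤ ⨆ m, M'.reachN π' T m [] s) :
    M.prReach π T β ≤ M'.prReach π' T β := by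
  refine iSup_le fun n => ?_
  calc ∑' s, β s * M.reachN π T n [] s ≤ ∑' s, β s * ⨆ m, M'.reachN π' T m [] s := by
        refine ENNReal.tsum_le_tsum fun s => ?_
        rcases eq_or_ne (β s) 0 with hs | hs
        · simp [hs]
        exact mul_le_mul_right (h s ((β.mem_support_iff s).2 hs) n) _
    _ = M'.prReach π' T β := ENNReal.tsum_mul_iSup_of_monotone _ fun s => reachN_mono [] s

end PrReach

section Switch

variable (σ : Policy Act Ω) (τ : Policy (Option Act) Ω)

def liftHist (h : List (Ω × Act)) : List (Ω × Option Act) :=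
  h.map fun p => (p.1, some p.2)

@[simp]
theorem liftHist_append_singleton (h : List (Ω × Act)) (ω : Ω) (a : Act) :
    liftHist (h ++ [(ω, a)]) = liftHist h ++ [(ω, some a)] := by
  simp [liftHist]

/-- Along `h`, played after the history `pre`, `τ` never puts mass on the shortcut action. -/
def ShortcutFree : List (Ω × Option Act) → List (Ω × Act) → Prop
  | _, [] => True
  | pre, (ω, a) :: h => τ pre ω none = 0 ∧ ShortcutFree (pre ++ [(ω, some a)]) h

/-- Play `τ` (which has seen `pre`) until it first puts positive mass on the shortcut action,
then hand over to `σ` started afresh. The switch is deterministic because the shortcut action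
leaves no trace in a history of `M`: a randomised switch could not tell `σ` when it started. -/
noncomputable def switchPolicyAfter : List (Ω × Option Act) → Policy Act Ω
  | pre, [], ω =>
    if τ pre ω none = 0 then (τ pre ω).bind (Option.elim · (σ [] ω) PMF.pure) else σ [] ω
  | pre, (ω₀, a) :: h, ω =>
    if τ pre ω₀ none = 0 then switchPolicyAfter (pre ++ [(ω₀, some a)]) h ω
    else σ ((ω₀, a) :: h) ω

noncomputable def switchPolicy : Policy Act Ω :=
  switchPolicyAfter σ τ []

variable {σ τ}

theorem shortcutFree_append_singleton {pre : List (Ω × Option Act)} {h : List (Ω × Act)}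
    {ω : Ω} {a : Act} :
    ShortcutFree τ pre (h ++ [(ω, a)]) ↔
      ShortcutFree τ pre h ∧ τ (pre ++ liftHist h) ω none = 0 := by
  induction h generalizing pre with
  | nil => simp [ShortcutFree, liftHist]
  | cons p h ih => simp [ShortcutFree, ih, liftHist, and_assoc]

theorem switchPolicyAfter_append {pre : List (Ω × Option Act)} {h : List (Ω × Act)}
    (hN : ShortcutFree τ pre h) (g : List (Ω × Act)) :
    switchPolicyAfter σ τ pre (h ++ g) = switchPolicyAfter σ τ (pre ++ liftHist h) g := by
  induction h generalizing pre with
  | nil => simp [liftHist]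
  | cons p h ih =>
    simp only [List.cons_append, switchPolicyAfter, if_pos hN.1, ih hN.2]
    simp [liftHist]

theorem switchPolicy_apply_of_eq_zero {h : List (Ω × Act)} {ω : Ω}
    (hN : ShortcutFree τ [] h) (h0 : τ (liftHist h) ω none = 0) (a : Act) :
    switchPolicy σ τ h ω a = τ (liftHist h) ω (some a) := by
  have := switchPolicyAfter_append (σ := σ) hN []
  rw [List.append_nil, List.nil_append] at this
  rw [switchPolicy, this, switchPolicyAfter, if_pos h0, PMF.bind_apply,
    tsum_option_of_none_eq_zero (by simp [h0])]
  simp [PMF.pure_apply]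

theorem switchPolicy_of_ne_zero {h : List (Ω × Act)} {ω : Ω}
    (hN : ShortcutFree τ [] h) (h0 : τ (liftHist h) ω none ≠ 0) :
    switchPolicy σ τ h ω = σ [] ω := by
  have := switchPolicyAfter_append (σ := σ) hN []
  rw [List.append_nil, List.nil_append] at this
  rw [switchPolicy, this, switchPolicyAfter, if_neg h0]

theorem switchPolicy_append_cons_of_ne_zero {h : List (Ω × Act)} {ω : Ω}
    (hN : ShortcutFree τ [] h) (h0 : τ (liftHist h) ω none ≠ 0) (a : Act)
    (g : List (Ω × Act)) :
    switchPolicy σ τ (h ++ [(ω, a)] ++ g) = σ ([(ω, a)] ++ g) := by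
  funext ω'
  rw [switchPolicy, List.append_assoc, switchPolicyAfter_append hN, List.nil_append,
    List.singleton_append, switchPolicyAfter, if_neg h0]

theorem reachN_switchPolicy_of_ne_zero {M : POMDP S Act Ω} {T : Set S} {h : List (Ω × Act)}
    {s : S} (hN : ShortcutFree τ [] h) (h0 : τ (liftHist h) (M.obs s) none ≠ 0) (n : ℕ) :
    M.reachN (switchPolicy σ τ) T n h s = M.reachN σ T n [] s := by
  cases n with
  | zero => rfl
  | succ n =>
    by_cases hs : s ∈ T
    · rw [reachN_of_mem M _ T hs, reachN_of_mem M _ T hs]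
    simp only [reachN_succ_of_notMem M _ T hs, switchPolicy_of_ne_zero hN h0]
    refine tsum_congr fun a => congrArg _ (tsum_congr fun s' => congrArg _ ?_)
    simpa using reachN_append_congr (M := M) (T := T)
      (switchPolicy_append_cons_of_ne_zero hN h0 a) n [] s'

end Switch

section Shortcut

variable {M : POMDP S Act Ω} {W : Set (Set S)} {top bot : S} {τ : Policy (Option Act) Ω}
  {A : Set S}

@[simp]
theorem shortcut_obs : (M.shortcut W top bot).obs = M.obs := rfl

@[simp]
theorem shortcut_P_some (s : S) (a : Act) : (M.shortcut W top bot).P s (some a) = M.P s a := rfl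

theorem reachN_shortcut_append_eq_zero {h : List (Ω × Act)} {s s' : S} {a : Act}
    (hA : ∀ k, (M.shortcut W top bot).reachN τ A k (liftHist h) s = 0)
    (ha : τ (liftHist h) (M.obs s) (some a) ≠ 0) (hs' : M.P s a s' ≠ 0) (k : ℕ) :
    (M.shortcut W top bot).reachN τ A k (liftHist (h ++ [(M.obs s, a)])) s' = 0 := by
  rw [liftHist_append_singleton]
  exact reachN_append_eq_zero (hA (k + 1)) ha hs'

theorem singleton_mem_of_reachN_shortcut_eq_zero (hbot : bot ∈ A) {g : List (Ω × Option Act)}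
    {s : S} (hA : ∀ k, (M.shortcut W top bot).reachN τ A k g s = 0)
    (h0 : τ g (M.obs s) none ≠ 0) : {s} ∈ W := by
  by_contra hsW
  have hbot' := reachN_append_eq_zero (s' := bot) (hA 1) h0 (by simp [shortcut, hsW])
  exact notMem_of_reachN_eq_zero hbot' hbot

variable (σ : Policy Act Ω)

theorem reachN_switchPolicy_eq_zero (hbot : bot ∈ A)
    (hσ : ∀ s, {s} ∈ W → M.prReach σ A (PMF.pure s) = 0) (n : ℕ) {h : List (Ω × Act)} {s : S}
    (hN : ShortcutFree τ [] h)
    (hA : ∀ k, (M.shortcut W top bot).reachN τ A k (liftHist h) s = 0) :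
    M.reachN (switchPolicy σ τ) A n h s = 0 := by
  induction n generalizing h s with
  | zero => exact hA 0
  | succ n ih =>
    by_cases h0 : τ (liftHist h) (M.obs s) none = 0
    · rw [reachN_succ_of_notMem M _ A (notMem_of_reachN_eq_zero (hA 0)),
        ENNReal.tsum_eq_zero]
      intro a
      rw [switchPolicy_apply_of_eq_zero hN h0]
      rcases eq_or_ne (τ (liftHist h) (M.obs s) (some a)) 0 with ha | ha
      · simp [ha]
      refine mul_eq_zero_of_right _ (ENNReal.tsum_eq_zero.2 fun s' => ?_)
      rcases eq_or_ne (M.P s a s') 0 with hs' | hs'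
      · simp [hs']
      exact mul_eq_zero_of_right _ (ih (shortcutFree_append_singleton.2 ⟨hN, h0⟩)
        (reachN_shortcut_append_eq_zero hA ha hs'))
    · rw [reachN_switchPolicy_of_ne_zero hN h0]
      exact prReach_eq_zero_iff.1 (hσ s (singleton_mem_of_reachN_shortcut_eq_zero hbot hA h0))
        s (by simp) (n + 1)

theorem reachN_shortcut_le_iSup_switchPolicy {T : Set S} (hbot : bot ∈ A)
    (hσ : ∀ s, {s} ∈ W → M.prReach σ T (PMF.pure s) = 1) (n : ℕ) {h : List (Ω × Act)}
    {s : S} (hN : ShortcutFree τ [] h)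
    (hA : ∀ k, (M.shortcut W top bot).reachN τ A k (liftHist h) s = 0) :
    (M.shortcut W top bot).reachN τ T n (liftHist h) s ≤
      ⨆ m, M.reachN (switchPolicy σ τ) T m h s := by
  induction n generalizing h s with
  | zero => exact le_iSup_of_le 0 le_rfl
  | succ n ih =>
    by_cases h0 : τ (liftHist h) (M.obs s) none = 0
    · by_cases hs : s ∈ T
      · rw [reachN_of_mem _ _ T hs]
        exact le_iSup_of_le 0 (reachN_of_mem M _ T hs).ge
      rw [reachN_succ_of_notMem _ _ T hs, tsum_option_of_none_eq_zero (by simp [h0])]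
      simp only [shortcut_obs, shortcut_P_some, ← switchPolicy_apply_of_eq_zero (σ := σ) hN h0]
      refine tsum_le_iSup_reachN hs _ fun a s' ha hs' => ?_
      rw [switchPolicy_apply_of_eq_zero hN h0] at ha
      simpa using ih (shortcutFree_append_singleton.2 ⟨hN, h0⟩)
        (reachN_shortcut_append_eq_zero hA ha hs')
    · calc (M.shortcut W top bot).reachN τ T (n + 1) (liftHist h) s ≤ 1 := reachN_le_one _ _ _
        _ = ⨆ m, M.reachN σ T m [] s := by
          rw [← prReach_pure, hσ s (singleton_mem_of_reachN_shortcut_eq_zero hbot hA h0)]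
        _ = ⨆ m, M.reachN (switchPolicy σ τ) T m h s := by
          simp only [reachN_switchPolicy_of_ne_zero hN h0]

end Shortcut

section Lift

def stripHist (h : List (Ω × Option Act)) : List (Ω × Act) :=
  h.filterMap fun p => p.2.map (p.1, ·)

noncomputable def liftPolicy (π : Policy Act Ω) : Policy (Option Act) Ω :=
  fun h ω => (π (stripHist h) ω).map some

variable {M : POMDP S Act Ω} {W : Set (Set S)} {top bot : S} {π : Policy Act Ω} {T : Set S}

theorem reachN_shortcut_liftPolicy (n : ℕ) (h : List (Ω × Option Act)) (s : S) :
    (M.shortcut W top bot).reachN (liftPolicy π) T n h s = M.reachN π T n (stripHist h) s := by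
  induction n generalizing h s with
  | zero => rfl
  | succ n ih =>
    by_cases hs : s ∈ T
    · rw [reachN_of_mem _ _ T hs, reachN_of_mem _ _ T hs]
    rw [reachN_succ_of_notMem _ _ T hs, reachN_succ_of_notMem _ _ T hs,
      tsum_option_of_none_eq_zero (by simp [liftPolicy, PMF.map_apply])]
    refine tsum_congr fun a => ?_
    simp [liftPolicy, PMF.map_apply, ih, stripHist]

theorem prReach_shortcut_liftPolicy (β : PMF S) :
    (M.shortcut W top bot).prReach (liftPolicy π) T β = M.prReach π T β := by
  simp only [prReach, reachN_shortcut_liftPolicy]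
  rfl

end Lift

end POMDP

theorem shortcut_winning_iff_general {S Act Ω : Type}
    (M : POMDP S Act Ω) (REACH AVOID : Set S)
    (top bot : S) (hbot : bot ∈ AVOID)
    (σ : POMDP.Policy Act Ω) (W : Set (Set S))
    (hW : ∀ b : Set S, b ∈ W ↔
      (M.IsBeliefSupport b ∧ M.WinningFromSupport REACH AVOID σ b)) :
    ∀ b : Set S,
      (M.shortcut W top bot).WinningSupport REACH AVOID b ↔
        M.WinningSupport REACH AVOID b := by
  intro b
  constructor
  · rintro ⟨τ, hτ⟩
    have hσ : ∀ s, {s} ∈ W → M.WinningPolicyFrom REACH AVOID σ (PMF.pure s) :=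
      fun s hs => ((hW _).1 hs).2 _ (PMF.support_pure s)
    refine ⟨POMDP.switchPolicy σ τ, fun β hβ => ?_⟩
    obtain ⟨hτAvoid, hτReach⟩ := hτ β hβ
    have hτSafe := POMDP.prReach_eq_zero_iff.1 hτAvoid
    refine ⟨POMDP.prReach_eq_zero_iff.2 fun s hs n => ?_, le_antisymm (POMDP.prReach_le_one β) ?_⟩
    · exact POMDP.reachN_switchPolicy_eq_zero σ hbot (fun s hs => (hσ s hs).1) n trivial
        (hτSafe s hs)
    · refine hτReach ▸ POMDP.prReach_le_prReach_of_le_iSup fun s hs n => ?_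
      exact POMDP.reachN_shortcut_le_iSup_switchPolicy σ hbot (fun s hs => (hσ s hs).2) n trivial
        (hτSafe s hs)
  · rintro ⟨π, hπ⟩
    refine ⟨POMDP.liftPolicy π, fun β hβ => ?_⟩
    simpa only [POMDP.WinningPolicyFrom, POMDP.prReach_shortcut_liftPolicy] using hπ β hβ

/-- For a POMDP `M` and a policy `σ` with associated winning
region `W` (exactly the belief supports from which `σ` is winning), the winning
belief supports of the shortcutted POMDP `M{σ}` coincide with those of `M`. -/
theorem shortcut_winning_iff {S Act Ω : Type} [Fintype S] [Fintype Act]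
    (M : POMDP S Act Ω) (REACH AVOID : Set S)
    (hdisj : Disjoint REACH AVOID)
    (hR : M.Absorbing REACH) (hA : M.Absorbing AVOID)
    (top bot : S) (htop : top ∈ REACH) (hbot : bot ∈ AVOID)
    (σ : POMDP.Policy Act Ω) (W : Set (Set S))
    (hW : ∀ b : Set S, b ∈ W ↔
      (M.IsBeliefSupport b ∧ M.WinningFromSupport REACH AVOID σ b)) :
    ∀ b : Set S,
      (M.shortcut W top bot).WinningSupport REACH AVOID b ↔
        M.WinningSupport REACH AVOID b :=
  shortcut_winning_iff_general M REACH AVOID top bot hbot σ W hW
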